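/- arXiv:2603.25076 — 3 statements merged into one kernel-verified Lean document; each statement's English description precedes it below -/
import Mathlib

section
/- For real s > 1, the prime zeta function satisfies P(s) = ∑_{n=1}^∞ (μ(n)/n) · log ζ(ns), where μ is the Möbius function and ζ is the Riemann zeta function. -/
/-- The prime zeta function `P(s) = ∑_p p^{-s}` for real `s`. -/
noncomputable def primeZeta (s : ℝ) : ℝ := ∑' p : Nat.Primes, 1 / (p : ℝ) ^ s

/-!
Expanding `-log (1 - z) = ∑ₘ zᵐ/m`, the series `∑ₙ μ(n)/n · (-log (1 - zⁿ))` becomes the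
absolutely convergent double series `∑_{n,m} μ(n) z^{nm}/(nm)` (for `‖z‖ < 1`); grouping its
terms by `N = nm` gives `∑_N (∑_{d ∣ N} μ(d)) z^N/N = z`, since the inner sum is `[N = 1]`.
Take `z = p^{-s}` and sum over the primes: by the Euler product,
`log ζ(t) = ∑_p -log (1 - p^{-t})` for real `t > 1` (both sides are real, so the principal
branch of `log` causes no trouble). The sums over `n` and `p` may be swapped because
`‖log (1 - w)‖ ≤ 3/2 ‖w‖` for `‖w‖ ≤ 1/2` and `∑_{p,n} p^{-ns}` is a subseries of `∑_k k^{-s}`.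
-/

open ArithmeticFunction Complex
open scoped ArithmeticFunction.Moebius

theorem ArithmeticFunction.sum_divisors_moebius {R : Type*} [Ring R] (n : ℕ) :
    ∑ d ∈ n.divisors, (μ d : R) = if n = 1 then 1 else 0 := by
  have h := congrArg (· n) (coe_moebius_mul_coe_zeta (R := R))
  simp only [coe_mul_zeta_apply, one_apply, intCoe_apply] at h
  exact h

theorem ArithmeticFunction.norm_moebius_le_one (n : ℕ) : ‖(μ n : ℂ)‖ ≤ 1 := by
  rw [norm_intCast]
  exact_mod_cast abs_moebius_le_one

theorem hasSum_moebius_div_mul_neg_log_one_sub_pow {z : ℂ} (hz : ‖z‖ < 1) :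
    HasSum (fun n : ℕ+ ↦ (μ n : ℂ) / n * -log (1 - z ^ (n : ℕ))) z := by
  set f : ℕ+ × ℕ+ → ℂ := fun c ↦ μ c.1 * (z ^ (c.1 * c.2 : ℕ) / (c.1 * c.2 : ℕ)) with hf_def
  have hf : Summable f := by
    refine (summable_prod_mul_pow 0 hz).norm.of_norm_bounded fun c ↦ ?_
    have hc : (1 : ℝ) ≤ ((c.1 * c.2 : ℕ) : ℝ) := Nat.one_le_cast.mpr (c.1 * c.2).pos
    rw [norm_mul, pow_zero, one_mul, norm_div, Complex.norm_natCast]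
    calc _ ≤ 1 * ‖z ^ (c.1 * c.2 : ℕ)‖ :=
          mul_le_mul (norm_moebius_le_one _) (div_le_self (norm_nonneg _) hc) (by positivity)
            zero_le_one
      _ = _ := one_mul _
  have hrow (n : ℕ+) : HasSum (fun m ↦ f (n, m)) ((μ n : ℂ) / n * -log (1 - z ^ (n : ℕ))) := by
    have hzn : ‖z ^ (n : ℕ)‖ < 1 := by
      rw [norm_pow]
      exact pow_lt_one₀ (norm_nonneg z) hz n.ne_zero
    have h := (hasSum_pnat_iff (f := fun m : ℕ ↦ (z ^ (n : ℕ)) ^ m / m)).mpr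
      (by simpa using hasSum_taylorSeries_neg_log hzn)
    refine (h.mul_left ((μ n : ℂ) / n)).congr_fun fun m ↦ ?_
    simp only [hf_def, pow_mul, Nat.cast_mul]
    field_simp
  have hfiber (N : ℕ+) :
      HasSum (fun x : (N : ℕ).divisorsAntidiagonal ↦ f (sigmaAntidiagonalEquivProd ⟨N, x⟩))
        (if N = 1 then z else 0) := by
    have hterm (x : (N : ℕ).divisorsAntidiagonal) :
        f (sigmaAntidiagonalEquivProd ⟨N, x⟩) = μ x.1.1 * (z ^ (N : ℕ) / (N : ℕ)) := by
      have hx : x.1.1 * x.1.2 = N := (Nat.mem_divisorsAntidiagonal.mp x.2).1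
      calc f (sigmaAntidiagonalEquivProd ⟨N, x⟩)
          = μ x.1.1 * (z ^ (x.1.1 * x.1.2) / (x.1.1 * x.1.2 : ℕ)) := rfl
        _ = _ := by rw [hx]
    convert hasSum_fintype _ using 1
    rw [Finset.sum_congr rfl fun x _ ↦ hterm x, ← Finset.sum_mul, Finset.univ_eq_attach,
      Finset.sum_attach _ fun x : ℕ × ℕ ↦ (μ x.1 : ℂ),
      Nat.sum_divisorsAntidiagonal fun a _ ↦ (μ a : ℂ), sum_divisors_moebius]
    split_ifs <;> simp_all [PNat.coe_eq_one_iff]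
  have htot : HasSum f z := by
    have h := (sigmaAntidiagonalEquivProd.hasSum_iff.mpr hf.hasSum).sigma hfiber
    rw [(hasSum_ite_eq 1 z).unique h]
    exact hf.hasSum
  exact htot.prod_fiberwise hrow

theorem Nat.Primes.rpow_neg_le_half (p : Nat.Primes) {s : ℝ} (hs : 1 ≤ s) :
    (p : ℝ) ^ (-s) ≤ 1 / 2 := by
  have hp : (2 : ℝ) ≤ p := by exact_mod_cast p.prop.two_le
  calc (p : ℝ) ^ (-s) ≤ (p : ℝ) ^ (-1 : ℝ) :=
        Real.rpow_le_rpow_of_exponent_le (by linarith) (by linarith)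
    _ ≤ 1 / 2 := by
        rw [Real.rpow_neg_one, one_div]
        exact inv_anti₀ two_pos hp

theorem Nat.Primes.summable_rpow_neg_pow {s : ℝ} (hs : 1 < s) :
    Summable fun q : Nat.Primes × ℕ+ ↦ ((q.1 : ℝ) ^ (-s)) ^ (q.2 : ℕ) := by
  have hinj : Function.Injective fun q : Nat.Primes × ℕ+ ↦ (q.1 : ℕ) ^ (q.2 : ℕ) := by
    rintro ⟨p, m⟩ ⟨q, n⟩ h
    obtain ⟨hpq, hmn⟩ := p.prop.pow_inj' q.prop m.ne_zero n.ne_zero h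
    exact Prod.ext (Subtype.ext hpq) (PNat.coe_injective hmn)
  refine ((Real.summable_one_div_nat_rpow.mpr hs).comp_injective hinj).congr fun q ↦ ?_
  simp [Real.rpow_pow_comm, Real.rpow_neg]

theorem norm_natCast_cpow_neg_ofReal {n : ℕ} (hn : 0 < n) (s : ℝ) :
    ‖(n : ℂ) ^ (-(s : ℂ))‖ = (n : ℝ) ^ (-s) := by
  simp [norm_natCast_cpow_of_pos hn]

theorem summable_moebius_div_mul_neg_log_one_sub_cpow {s : ℝ} (hs : 1 < s) :
    Summable fun q : Nat.Primes × ℕ+ ↦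
      (μ q.2 : ℂ) / q.2 * -log (1 - ((q.1 : ℂ) ^ (-(s : ℂ))) ^ (q.2 : ℕ)) := by
  refine ((Nat.Primes.summable_rpow_neg_pow hs).mul_left (3 / 2)).of_norm_bounded fun q ↦ ?_
  set w := ((q.1 : ℂ) ^ (-(s : ℂ))) ^ (q.2 : ℕ)
  have hw : ‖w‖ = ((q.1 : ℝ) ^ (-s)) ^ (q.2 : ℕ) := by
    rw [norm_pow, norm_natCast_cpow_neg_ofReal q.1.prop.pos]
  have hw_half : ‖w‖ ≤ 1 / 2 := by
    have h := q.1.rpow_neg_le_half hs.le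
    rw [hw]
    exact (pow_le_of_le_one (by positivity) (by linarith) q.2.ne_zero).trans h
  have hlog : ‖log (1 - w)‖ ≤ 3 / 2 * ‖w‖ := by
    simpa [sub_eq_add_neg] using norm_log_one_add_half_le_self (z := -w) (by simpa using hw_half)
  have hmoeb : ‖(μ q.2 : ℂ) / q.2‖ ≤ 1 := by
    rw [norm_div, Complex.norm_natCast]
    exact div_le_one_of_le₀ ((norm_moebius_le_one _).trans (Nat.one_le_cast.mpr q.2.pos))
      (by positivity)
  calc ‖(μ q.2 : ℂ) / q.2 * -log (1 - w)‖ ≤ 1 * (3 / 2 * ‖w‖) := by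
        rw [norm_mul, norm_neg]
        gcongr
    _ = _ := by rw [hw, one_mul]

theorem log_riemannZeta_ofReal_eq_tsum {t : ℝ} (ht : 1 < t) :
    log (riemannZeta t) = ∑' p : Nat.Primes, -log (1 - (p : ℂ) ^ (-(t : ℂ))) := by
  have hreal : ∑' p : Nat.Primes, -log (1 - (p : ℂ) ^ (-(t : ℂ))) =
      ((∑' p : Nat.Primes, -Real.log (1 - (p : ℝ) ^ (-t)) : ℝ) : ℂ) := by
    rw [ofReal_tsum]
    refine tsum_congr fun p ↦ ?_
    have hp : (1 : ℝ) ≤ p := by exact_mod_cast p.prop.one_lt.le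
    have hpos : 0 ≤ 1 - (p : ℝ) ^ (-t) :=
      sub_nonneg.mpr (Real.rpow_le_one_of_one_le_of_nonpos hp (by linarith))
    rw [ofReal_neg, ofReal_log hpos, ofReal_sub, ofReal_one, ofReal_cpow (by positivity),
      ofReal_neg, ofReal_natCast]
  rw [← riemannZeta_eulerProduct_exp_log (by simpa using ht), hreal, ← ofReal_exp,
    ← ofReal_log (Real.exp_pos _).le, Real.log_exp]

theorem ofReal_primeZeta_eq_tsum (s : ℝ) :
    (primeZeta s : ℂ) = ∑' p : Nat.Primes, (p : ℂ) ^ (-(s : ℂ)) := by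
  rw [primeZeta, ofReal_tsum]
  refine tsum_congr fun p ↦ ?_
  rw [ofReal_div, ofReal_one, ofReal_cpow (by positivity), ofReal_natCast, cpow_neg, one_div]

theorem primeZeta_eq_moebius_sum (s : ℝ) (hs : 1 < s) :
    (primeZeta s : ℂ) =
      ∑' n : ℕ+, ((ArithmeticFunction.moebius n : ℂ) / (n : ℂ)) *
        Complex.log (riemannZeta ((n : ℂ) * (s : ℂ))) := by
  have hz (p : Nat.Primes) : ‖(p : ℂ) ^ (-(s : ℂ))‖ < 1 := by
    rw [norm_natCast_cpow_neg_ofReal p.prop.pos]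
    linarith [p.rpow_neg_le_half hs.le]
  calc (primeZeta s : ℂ) = ∑' p : Nat.Primes, (p : ℂ) ^ (-(s : ℂ)) := ofReal_primeZeta_eq_tsum s
    _ = ∑' (p : Nat.Primes) (n : ℕ+),
          (μ n : ℂ) / n * -log (1 - ((p : ℂ) ^ (-(s : ℂ))) ^ (n : ℕ)) :=
        tsum_congr fun p ↦ (hasSum_moebius_div_mul_neg_log_one_sub_pow (hz p)).tsum_eq.symm
    _ = ∑' (n : ℕ+) (p : Nat.Primes),
          (μ n : ℂ) / n * -log (1 - ((p : ℂ) ^ (-(s : ℂ))) ^ (n : ℕ)) :=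
        (summable_moebius_div_mul_neg_log_one_sub_cpow hs).tsum_comm.symm
    _ = _ := by
        refine tsum_congr fun n ↦ ?_
        have hns : 1 < (n : ℝ) * s := one_lt_mul_of_le_of_lt (Nat.one_le_cast.mpr n.pos) hs
        rw [show (n : ℂ) * (s : ℂ) = ((n * s : ℝ) : ℂ) by push_cast; rfl,
          log_riemannZeta_ofReal_eq_tsum hns, ← tsum_mul_left]
        refine tsum_congr fun p ↦ ?_
        rw [← cpow_nat_mul]
        push_cast
        ring_nf
end

section
/- For real z > 0, the exponential integral satisfies E₁(z) = -γ - log z - ∑_{k=1}^∞ (-z)^k/(k·k!), where γ is the Euler–Mascheroni constant. -/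
/-- The exponential integral `E₁(z) = ∫_z^∞ e^{-t}/t dt` for real `z`. -/
noncomputable def expIntE1 (z : ℝ) : ℝ := ∫ t in Set.Ioi z, Real.exp (-t) / t

/-!
Integrating by parts, `E₁(z) = -e^{-z} log z + ∫_z^∞ e^{-t} log t dt`, and the integral over the
whole half-line is `∫_0^∞ e^{-t} log t dt = Γ'(1) = -γ`. Integrating the missing piece
`∫_0^z e^{-t} log t dt` by parts against `1 - e^{-t}` (which vanishes at `0`, so no boundary term
appears there) leaves `(1 - e^{-z}) log z - ∫_0^z (1 - e^{-t}) / t dt`, and integrating the power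
series of `(1 - e^{-t}) / t` termwise gives the series.
-/

open Real MeasureTheory Set Filter Topology

lemma abs_log_le_self_add_inv {t : ℝ} (ht : 0 < t) : |log t| ≤ t + t⁻¹ :=
  abs_le.2 ⟨by linarith [neg_inv_le_log ht.le], by linarith [log_le_self ht.le, inv_pos.2 ht]⟩

lemma integrableOn_exp_neg_div_Ioi {z : ℝ} (hz : 0 < z) :
    IntegrableOn (fun t => exp (-t) / t) (Ioi z) := by
  refine ((integrableOn_exp_neg_Ioi z).div_const z).mono'
    (by fun_prop : Measurable fun t : ℝ => exp (-t) / t).aestronglyMeasurable ?_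
  filter_upwards [ae_restrict_mem measurableSet_Ioi] with t (ht : z < t)
  rw [norm_of_nonneg (div_nonneg (exp_pos _).le (hz.trans ht).le)]
  gcongr

lemma integrableOn_exp_neg_mul_log_Ioi {z : ℝ} (hz : 0 < z) :
    IntegrableOn (fun t => exp (-t) * log t) (Ioi z) := by
  have hmul : IntegrableOn (fun t => exp (-t) * t) (Ioi z) := by
    refine ((GammaIntegral_convergent two_pos).mono_set (Ioi_subset_Ioi hz.le)).congr_fun
      (fun t _ => ?_) measurableSet_Ioi
    norm_num
  refine (hmul.add (integrableOn_exp_neg_div_Ioi hz)).mono' (by fun_prop) ?_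
  filter_upwards [ae_restrict_mem measurableSet_Ioi] with t (ht : z < t)
  rw [norm_mul, norm_of_nonneg (exp_pos _).le, norm_eq_abs, Pi.add_apply, div_eq_mul_inv,
    ← mul_add]
  gcongr
  exact abs_log_le_self_add_inv (hz.trans ht)

lemma integrableOn_exp_neg_mul_log : IntegrableOn (fun t => exp (-t) * log t) (Ioi 0) := by
  rw [← Ioc_union_Ioi_eq_Ioi zero_le_one, integrableOn_union,
    ← intervalIntegrable_iff_integrableOn_Ioc_of_le zero_le_one]
  exact ⟨intervalIntegral.intervalIntegrable_log'.continuousOn_mul (by fun_prop),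
    integrableOn_exp_neg_mul_log_Ioi one_pos⟩

lemma integral_exp_neg_mul_log : ∫ t in Ioi 0, exp (-t) * log t = -eulerMascheroniConstant := by
  have hΓ : Complex.GammaIntegral =ᶠ[𝓝 1] Complex.Gamma := by
    filter_upwards [(isOpen_lt continuous_const Complex.continuous_re).mem_nhds
      (by norm_num : (0 : ℝ) < (1 : ℂ).re)] with s hs
    exact (Complex.Gamma_eq_integral hs).symm
  have h := ((Complex.hasDerivAt_GammaIntegral (by norm_num)).congr_of_eventuallyEq
    hΓ.symm).unique Complex.hasDerivAt_Gamma_one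
  simp only [sub_self, Complex.cpow_zero, one_mul, ← Complex.ofReal_mul] at h
  simp_rw [mul_comm (exp _)]
  exact_mod_cast h

lemma expIntE1_eq_integral_exp_neg_mul_log {z : ℝ} (hz : 0 < z) :
    expIntE1 z = -(exp (-z) * log z) + ∫ t in Ioi z, exp (-t) * log t := by
  have hderiv : ∀ t ∈ Ici z, HasDerivAt (fun t => exp (-t) * log t)
      (exp (-t) / t - exp (-t) * log t) t := by
    intro t ht
    convert! ((hasDerivAt_neg t).exp).mul (hasDerivAt_log (hz.trans_le ht).ne') using 1
    ring
  have hlim : Tendsto (fun t => exp (-t) * log t) atTop (𝓝 0) := by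
    have : (fun t => exp (-t) * log t) =o[atTop] fun t => exp (-t) * t :=
      (Asymptotics.isBigO_refl _ _).mul_isLittleO isLittleO_log_id_atTop
    exact this.trans_tendsto (by simpa [mul_comm] using tendsto_pow_mul_exp_neg_atTop_nhds_zero 1)
  have hparts := integral_Ioi_of_hasDerivAt_of_tendsto' hderiv
    ((integrableOn_exp_neg_div_Ioi hz).sub (integrableOn_exp_neg_mul_log_Ioi hz)) hlim
  rw [integral_sub (integrableOn_exp_neg_div_Ioi hz) (integrableOn_exp_neg_mul_log_Ioi hz)]
    at hparts
  rw [expIntE1]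
  linarith

lemma abs_one_sub_exp_neg_le {t : ℝ} (ht : 0 ≤ t) : |1 - exp (-t)| ≤ t :=
  abs_le.2 ⟨by linarith [exp_le_one_iff.2 (neg_nonpos.2 ht)], by linarith [one_sub_le_exp_neg t]⟩

lemma intervalIntegrable_one_sub_exp_neg_div {z : ℝ} (hz : 0 ≤ z) :
    IntervalIntegrable (fun t => (1 - exp (-t)) / t) volume 0 z := by
  refine (intervalIntegrable_const (c := (1 : ℝ))).mono_fun'
    (by fun_prop : Measurable fun t : ℝ => (1 - exp (-t)) / t).aestronglyMeasurable ?_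
  rw [uIoc_of_le hz]
  filter_upwards [ae_restrict_mem measurableSet_Ioc] with t ht
  rw [norm_div, norm_eq_abs, norm_of_nonneg ht.1.le, div_le_one ht.1]
  exact abs_one_sub_exp_neg_le ht.1.le

lemma intervalIntegral_exp_neg_mul_log {z : ℝ} (hz : 0 < z) :
    ∫ t in 0..z, exp (-t) * log t = (1 - exp (-z)) * log z - ∫ t in 0..z, (1 - exp (-t)) / t := by
  have hderiv : ∀ t ∈ Ioo 0 z, HasDerivAt (fun t => (1 - exp (-t)) * log t)
      (exp (-t) * log t + (1 - exp (-t)) / t) t := by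
    intro t ht
    convert! ((hasDerivAt_neg t).exp.const_sub 1).mul (hasDerivAt_log ht.1.ne') using 1
    ring
  have hlim₀ : Tendsto (fun t => (1 - exp (-t)) * log t) (𝓝[>] 0) (𝓝 0) := by
    have hmul_log : Tendsto (fun t => t * log t) (𝓝[>] 0) (𝓝 0) := by
      simpa using continuous_mul_log.continuousWithinAt (s := Ioi 0) (x := 0) |>.tendsto
    refine squeeze_zero_norm' ?_ (by simpa using hmul_log.norm)
    filter_upwards [self_mem_nhdsWithin] with t (ht : 0 < t)
    rw [norm_mul, norm_eq_abs, norm_eq_abs, abs_of_pos ht]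
    gcongr
    exact abs_one_sub_exp_neg_le ht.le
  have hlim_z : Tendsto (fun t => (1 - exp (-t)) * log t) (𝓝[<] z) (𝓝 ((1 - exp (-z)) * log z)) :=
    (ContinuousAt.mul (by fun_prop) (continuousAt_log hz.ne')).tendsto.mono_left
      nhdsWithin_le_nhds
  have hint₁ : IntervalIntegrable (fun t => exp (-t) * log t) volume 0 z :=
    intervalIntegral.intervalIntegrable_log'.continuousOn_mul (by fun_prop)
  have hint₂ := intervalIntegrable_one_sub_exp_neg_div hz.le
  have h := intervalIntegral.integral_eq_sub_of_hasDerivAt_of_tendsto hz hderiv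
    (hint₁.add hint₂) hlim₀ hlim_z
  rw [intervalIntegral.integral_add hint₁ hint₂] at h
  linarith

lemma hasSum_pow_div_factorial_succ {x : ℝ} (hx : x ≠ 0) :
    HasSum (fun n : ℕ => x ^ n / (n + 1).factorial) ((exp x - 1) / x) := by
  have h := (hasSum_nat_add_iff' 1).2 (NormedSpace.expSeries_div_hasSum_exp x)
  simp only [Finset.range_one, Finset.sum_singleton, pow_zero, Nat.factorial_zero, Nat.cast_one,
    div_one, ← exp_eq_exp_ℝ] at h
  refine (h.div_const x).congr_fun fun n => ?_
  rw [pow_succ, mul_div_right_comm, mul_div_cancel_right₀ _ hx]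

lemma hasSum_integral_one_sub_exp_neg_div {z : ℝ} (hz : 0 < z) :
    HasSum (fun n : ℕ => -(-z) ^ (n + 1) / ((n + 1) * (n + 1).factorial))
      (∫ t in 0..z, (1 - exp (-t)) / t) := by
  have hterm (n : ℕ) : ∫ t in 0..z, (-t) ^ n / (n + 1).factorial
      = -(-z) ^ (n + 1) / ((n + 1) * (n + 1).factorial) := by
    rw [intervalIntegral.integral_div, intervalIntegral.integral_comp_neg (fun t => t ^ n),
      integral_pow]
    field_simp
    simp
  simp_rw [← hterm]
  refine intervalIntegral.hasSum_integral_of_dominated_convergence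
    (fun n _ => z ^ n / (n + 1).factorial) (fun n => by fun_prop) (fun n => ?_)
    (.of_forall fun _ _ => (hasSum_pow_div_factorial_succ hz.ne').summable)
    intervalIntegrable_const (.of_forall fun t ht => ?_)
  · refine .of_forall fun t ht => ?_
    rw [uIoc_of_le hz.le] at ht
    rw [norm_div, norm_pow, norm_neg, norm_of_nonneg ht.1.le, norm_of_nonneg (by positivity)]
    gcongr
    exacts [ht.1.le, ht.2]
  · rw [uIoc_of_le hz.le] at ht
    rw [← neg_div_neg_eq, neg_sub]
    exact hasSum_pow_div_factorial_succ (neg_ne_zero.2 ht.1.ne')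

theorem expIntE1_eq_series (z : ℝ) (hz : 0 < z) :
    expIntE1 z = -Real.eulerMascheroniConstant - Real.log z -
      ∑' k : ℕ+, (-z) ^ (k : ℕ) / ((k : ℝ) * (Nat.factorial k)) := by
  have htail : ∫ t in Ioi z, exp (-t) * log t
      = -eulerMascheroniConstant - ∫ t in 0..z, exp (-t) * log t := by
    rw [← integral_exp_neg_mul_log, ← intervalIntegral.integral_Ioi_sub_Ioi
      integrableOn_exp_neg_mul_log hz.le, sub_sub_cancel]
  have hseries : ∫ t in 0..z, (1 - exp (-t)) / t
      = -∑' k : ℕ+, (-z) ^ (k : ℕ) / ((k : ℝ) * (Nat.factorial k)) := by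
    rw [← (hasSum_integral_one_sub_exp_neg_div hz).tsum_eq,
      tsum_pnat_eq_tsum_succ (f := fun k => (-z) ^ k / ((k : ℝ) * k.factorial)), ← tsum_neg]
    push_cast
    simp only [neg_div]
  rw [expIntE1_eq_integral_exp_neg_mul_log hz, htail, intervalIntegral_exp_neg_mul_log hz,
    hseries]
  ring
end

section
/- Assume the Riemann Hypothesis bound |π(x) - li(x)| ≤ C·√x·log x for x ≥ 2. Then for every real s with 1/2 < s, the limit lim_{x→∞} [ ∑_{p ≤ x} p^{-s} + E₁((s-1)·log x) ] exists (for s ≠ 1, interpreting E₁ at negative real argument via its real principal value -γ - log|z| - ∑_{k≥1}(-z)^k/(k·k!)). -/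
/-- The prime counting function `π(x)` for real `x`. -/
noncomputable def primePi (x : ℝ) : ℝ := Nat.primeCounting ⌊x⌋₊

/-- The principal-value logarithmic integral `li(x) = P.V. ∫_0^x dt / log t`. -/
noncomputable def li (x : ℝ) : ℝ :=
  Filter.limUnder (nhdsWithin 0 (Set.Ioi (0 : ℝ))) fun ε : ℝ =>
    (∫ t in (0 : ℝ)..(1 - ε), 1 / Real.log t) + ∫ t in (1 + ε)..x, 1 / Real.log t

/-- The exponential integral extended to all nonzero real arguments via the real
principal value `-γ - log |z| - ∑_{k≥1} (-z)^k / (k·k!)`. -/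
noncomputable def expIntE1Ext (z : ℝ) : ℝ :=
  -Real.eulerMascheroniConstant - Real.log |z| -
    ∑' k : ℕ+, (-z) ^ (k : ℕ) / ((k : ℝ) * (Nat.factorial k))

/-!
Write `E = π - li`. Abel summation gives
`∑_{p ≤ y} p^{-s} = y^{-s} π(y) + s ∫_2^y t^{-s-1} π(t) dt`, and since
`d/dx E₁((s - 1) log x) = -x^{-s} / log x = -x^{-s} li'(x)`, integrating by parts against `li`
in the same way makes the main terms cancel:
`∑_{p ≤ y} p^{-s} + E₁((s - 1) log y) = c + y^{-s} E(y) + s ∫_2^y t^{-s-1} E(t) dt`.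
The hypothesis gives `E(t) = O(t^{1/2 + ε})` with `1/2 + ε < s`, so the boundary term tends to `0`
and the integral converges absolutely as `y → ∞`.
-/

open Real Filter Topology MeasureTheory Set intervalIntegral
open scoped Nat Interval

noncomputable def ein (z : ℝ) : ℝ := ∑' n : ℕ, -(-z) ^ (n + 1) / ((n + 1) * (n + 1)!)

lemma expIntE1Ext_eq_ein (z : ℝ) : expIntE1Ext z = -eulerMascheroniConstant - log z + ein z := by
  rw [expIntE1Ext, log_abs, ein,
    tsum_pnat_eq_tsum_succ (f := fun k : ℕ => (-z) ^ k / ((k : ℝ) * k !))]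
  simp_rw [neg_div, tsum_neg]
  push_cast
  ring

lemma hasDerivAt_ein (z : ℝ) : HasDerivAt ein (∑' n : ℕ, (-z) ^ n / (n + 1)!) z := by
  have hz : z ∈ Metric.ball (0 : ℝ) (|z| + 1) := by simp
  refine hasDerivAt_tsum_of_isPreconnected (u := fun n => (|z| + 1) ^ n / n !)
    (g := fun (n : ℕ) (y : ℝ) => -(-y) ^ (n + 1) / ((n + 1) * (n + 1)!))
    (g' := fun (n : ℕ) (y : ℝ) => (-y) ^ n / (n + 1)!)
    (Real.summable_pow_div_factorial _) Metric.isOpen_ball (convex_ball _ _).isPreconnected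
    (fun n y _ => ?_) (fun n y hy => ?_) (Metric.mem_ball_self (by positivity))
    (summable_of_ne_finset_zero (s := ∅) (by simp)) hz
  · refine (((hasDerivAt_neg y).fun_pow (n + 1)).neg.div_const _).congr_deriv ?_
    rw [Nat.factorial_succ]; push_cast; field_simp
  · rw [mem_ball_zero_iff] at hy
    rw [norm_div, norm_pow, norm_neg, Real.norm_natCast]
    gcongr
    linarith [abs_nonneg z]

lemma mul_tsum_neg_pow_div_factorial_succ (z : ℝ) :
    z * ∑' n : ℕ, (-z) ^ n / (n + 1)! = 1 - exp (-z) := by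
  have hexp : HasSum (fun n : ℕ => (-z) ^ n / n !) (exp (-z)) := by
    rw [Real.exp_eq_exp_ℝ]; exact NormedSpace.expSeries_div_hasSum_exp (-z)
  have htail := ((hasSum_nat_add_iff' 1).mpr hexp).neg
  rw [← tsum_mul_left]
  convert htail.tsum_eq using 1
  · congr 1; ext n; rw [pow_succ]; ring
  · simp

lemma hasDerivAt_expIntE1Ext {z : ℝ} (hz : z ≠ 0) :
    HasDerivAt expIntE1Ext (-exp (-z) / z) z := by
  have h := ((hasDerivAt_const z (-eulerMascheroniConstant)).sub (hasDerivAt_log hz)).add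
    (hasDerivAt_ein z)
  refine (h.congr_of_eventuallyEq (.of_forall expIntE1Ext_eq_ein)).congr_deriv ?_
  have := mul_tsum_neg_pow_div_factorial_succ z
  field_simp
  linear_combination this

lemma hasDerivAt_expIntE1Ext_mul_log {s x : ℝ} (hs : s ≠ 1) (hx : 1 < x) :
    HasDerivAt (fun y => expIntE1Ext ((s - 1) * log y)) (-(x ^ (-s) * (1 / log x))) x := by
  have hx0 : 0 < x := by linarith
  have hlog : log x ≠ 0 := (log_pos hx).ne'
  have hz : (s - 1) * log x ≠ 0 := mul_ne_zero (sub_ne_zero.mpr hs) hlog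
  refine ((hasDerivAt_expIntE1Ext hz).comp x
    ((hasDerivAt_log hx0.ne').const_mul (s - 1))).congr_deriv ?_
  rw [show -((s - 1) * log x) = log x * (1 + -s) by ring, ← rpow_def_of_pos hx0,
    rpow_add hx0, rpow_one]
  field_simp

lemma expIntE1Ext_mul_log_sub {s x y : ℝ} (hs : s ≠ 1) (hx : 1 < x) (hxy : x ≤ y) :
    expIntE1Ext ((s - 1) * log y) - expIntE1Ext ((s - 1) * log x) =
      -∫ t in x..y, t ^ (-s) * (1 / log t) := by
  have hmem : ∀ t ∈ uIcc x y, 1 < t := fun t ht => by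
    rw [uIcc_of_le hxy] at ht; linarith [ht.1]
  rw [← intervalIntegral.integral_neg]
  refine (integral_eq_sub_of_hasDerivAt
    (fun t ht => hasDerivAt_expIntE1Ext_mul_log hs (hmem t ht)) ?_).symm
  refine ContinuousOn.intervalIntegrable fun t ht => ?_
  have : log t ≠ 0 := (log_pos (hmem t ht)).ne'
  exact ((continuousAt_rpow_const _ _ (Or.inl (by linarith [hmem t ht]))).mul
    (continuousAt_const.div (continuousAt_log (by linarith [hmem t ht])) this)).neg
      |>.continuousWithinAt

noncomputable def invLogSubInvSubOne (t : ℝ) : ℝ := 1 / log t - 1 / (t - 1)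

-- `1 - 1/t ≤ log t ≤ t - 1`, all of the sign of `t - 1`, gives `1/(t-1) ≤ 1/log t ≤ t/(t-1)`.
lemma invLogSubInvSubOne_mem_Icc {t : ℝ} (ht : 0 ≤ t) : invLogSubInvSubOne t ∈ Icc 0 1 := by
  rcases ht.eq_or_lt with rfl | ht
  · norm_num [invLogSubInvSubOne]
  rcases eq_or_ne t 1 with rfl | ht1
  · norm_num [invLogSubInvSubOne]
  have hlog : log t ≤ t - 1 := log_le_sub_one_of_pos ht
  have hlog' : 1 - t⁻¹ ≤ log t := one_sub_inv_le_log_of_pos ht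
  have hid : 1 / (1 - t⁻¹) - 1 / (t - 1) = 1 := by
    have : t - 1 ≠ 0 := sub_ne_zero.mpr ht1
    field_simp
  obtain ⟨h₁, h₂⟩ : 1 / (t - 1) ≤ 1 / log t ∧ 1 / log t ≤ 1 / (1 - t⁻¹) := by
    rcases ht1.lt_or_gt with ht1 | ht1
    · exact ⟨one_div_le_one_div_of_neg_of_le (by linarith) hlog,
        one_div_le_one_div_of_neg_of_le (log_neg ht ht1) hlog'⟩
    · exact ⟨one_div_le_one_div_of_le (log_pos ht1) hlog,
        one_div_le_one_div_of_le (sub_pos.mpr (inv_lt_one_of_one_lt₀ ht1)) hlog'⟩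
  constructor <;> simp only [invLogSubInvSubOne] <;> linarith

lemma measurable_invLogSubInvSubOne : Measurable invLogSubInvSubOne := by
  unfold invLogSubInvSubOne; fun_prop

lemma intervalIntegrable_invLogSubInvSubOne {a b : ℝ} (ha : 0 ≤ a) (hb : 0 ≤ b) :
    IntervalIntegrable invLogSubInvSubOne volume a b := by
  refine (intervalIntegrable_const (c := (1 : ℝ))).mono_fun'
    measurable_invLogSubInvSubOne.aestronglyMeasurable ?_
  rw [EventuallyLE, ae_restrict_iff' measurableSet_uIoc]
  refine .of_forall fun t ht => ?_
  have := invLogSubInvSubOne_mem_Icc (t := t) (by linarith [ht.1, le_min ha hb])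
  rw [norm_of_nonneg this.1]
  exact this.2

lemma integral_one_div_log_eq {a b : ℝ} (ha : 0 ≤ a) (hb : 0 ≤ b)
    (h1 : (1 : ℝ) ∉ [[a, b]]) :
    ∫ t in a..b, 1 / log t = log ((b - 1) / (a - 1)) + ∫ t in a..b, invLogSubInvSubOne t := by
  have h0 : (0 : ℝ) ∉ [[a - 1, b - 1]] := by
    rw [mem_uIcc] at h1 ⊢; grind
  have hint : IntervalIntegrable (fun t => 1 / (t - 1)) volume a b := by
    refine ContinuousOn.intervalIntegrable fun t ht => ?_
    have : t - 1 ≠ 0 := sub_ne_zero.mpr (ne_of_mem_of_not_mem ht h1)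
    fun_prop (disch := assumption)
  rw [← integral_one_div h0, ← integral_comp_sub_right (fun t => 1 / t),
    ← integral_add hint (intervalIntegrable_invLogSubInvSubOne ha hb)]
  congr 1; ext t; simp [invLogSubInvSubOne]

lemma tendsto_integral_invLogSubInvSubOne_one_sub_one_add :
    Tendsto (fun ε => ∫ t in (1 - ε)..(1 + ε), invLogSubInvSubOne t) (𝓝 0) (𝓝 0) := by
  have hbound : ∀ᶠ ε in 𝓝 (0 : ℝ),
      ‖∫ t in (1 - ε)..(1 + ε), invLogSubInvSubOne t‖ ≤ 2 * |ε| := by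
    filter_upwards [Ioo_mem_nhds (show (-1 : ℝ) < 0 by norm_num) one_pos] with ε hε
    have hmin : 0 ≤ min (1 - ε) (1 + ε) := le_min (by linarith [hε.2]) (by linarith [hε.1])
    calc ‖∫ t in (1 - ε)..(1 + ε), invLogSubInvSubOne t‖ ≤ 1 * |(1 + ε) - (1 - ε)| :=
          intervalIntegral.norm_integral_le_of_norm_le_const fun t ht => by
            have := invLogSubInvSubOne_mem_Icc (hmin.trans ht.1.le)
            rw [norm_of_nonneg this.1]
            exact this.2
      _ = 2 * |ε| := by rw [show 1 + ε - (1 - ε) = 2 * ε by ring, abs_mul]; norm_num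
  refine squeeze_zero_norm' hbound ?_
  simpa using (continuous_abs.tendsto (0 : ℝ)).const_mul 2

-- Splitting off the pole `1 / (t - 1)`, whose principal value integral is `log (x - 1)`, leaves a
-- bounded integrand, so the excised interval `(1 - ε, 1 + ε)` only contributes `O(ε)`.
lemma li_eq {x : ℝ} (hx : 1 < x) : li x = log (x - 1) + ∫ t in 0..x, invLogSubInvSubOne t := by
  refine Tendsto.limUnder_eq ?_
  have hlim : Tendsto (fun ε => log (x - 1) + (∫ t in 0..x, invLogSubInvSubOne t) -
      ∫ t in (1 - ε)..(1 + ε), invLogSubInvSubOne t) (𝓝[>] 0)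
      (𝓝 (log (x - 1) + (∫ t in 0..x, invLogSubInvSubOne t) - 0)) :=
    tendsto_const_nhds.sub (tendsto_integral_invLogSubInvSubOne_one_sub_one_add.mono_left
      nhdsWithin_le_nhds)
  rw [sub_zero] at hlim
  refine hlim.congr' ?_
  filter_upwards [Ioo_mem_nhdsGT (lt_min one_pos (sub_pos.2 hx))] with ε ⟨hε0, hε⟩
  have h₁ : (0 : ℝ) ≤ 1 - ε := by linarith [hε.trans_le (min_le_left _ _)]
  have h₂ : (0 : ℝ) ≤ 1 + ε := by linarith
  have h₃ : 1 + ε ≤ x := by linarith [hε.trans_le (min_le_right _ _)]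
  have hII := @intervalIntegrable_invLogSubInvSubOne
  rw [integral_one_div_log_eq le_rfl h₁
      (by rw [uIcc_of_le h₁, mem_Icc]; intro h; linarith [h.2]),
    integral_one_div_log_eq h₂ (h₂.trans h₃)
      (by rw [uIcc_of_le h₃, mem_Icc]; intro h; linarith [h.1]),
    ← integral_add_adjacent_intervals (hII le_rfl h₁) (hII h₁ (h₂.trans h₃)),
    ← integral_add_adjacent_intervals (hII h₁ h₂) (hII h₂ (h₂.trans h₃)),
    show (1 - ε - 1) / (0 - 1) = ε by ring, show 1 + ε - 1 = ε by ring,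
    log_div (by linarith) hε0.ne']
  ring

lemma hasDerivAt_li {x : ℝ} (hx : 1 < x) : HasDerivAt li (1 / log x) x := by
  have hlog : log x ≠ 0 := (log_pos hx).ne'
  have hx1 : x - 1 ≠ 0 := sub_ne_zero.mpr hx.ne'
  have hcont : ContinuousAt invLogSubInvSubOne x := by
    unfold invLogSubInvSubOne; fun_prop (disch := first | assumption | linarith)
  have hFTC := integral_hasDerivAt_right
    (intervalIntegrable_invLogSubInvSubOne le_rfl (by linarith : (0 : ℝ) ≤ x))
    measurable_invLogSubInvSubOne.stronglyMeasurable.stronglyMeasurableAtFilter hcont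
  have hlog1 : HasDerivAt (fun y => log (y - 1)) (1 / (x - 1)) x := by
    simpa [one_div] using ((hasDerivAt_id x).sub_const 1).log hx1
  refine ((hlog1.add hFTC).congr_of_eventuallyEq ?_).congr_deriv ?_
  · filter_upwards [Ioi_mem_nhds hx] with y hy using li_eq hy
  · simp [invLogSubInvSubOne]

lemma continuousOn_li : ContinuousOn li (Ioi 1) :=
  fun _ hx => (hasDerivAt_li hx).continuousAt.continuousWithinAt

lemma integral_rpow_neg_mul_one_div_log {s x y : ℝ} (hx : 1 < x) (hxy : x ≤ y) :
    ∫ t in x..y, t ^ (-s) * (1 / log t) =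
      y ^ (-s) * li y - x ^ (-s) * li x - ∫ t in x..y, (-s * t ^ (-s - 1)) * li t := by
  have hmem : ∀ t ∈ uIcc x y, 1 < t := fun t ht => by
    rw [uIcc_of_le hxy] at ht; linarith [ht.1]
  refine integral_mul_deriv_eq_deriv_mul
    (fun t ht => hasDerivAt_rpow_const (Or.inl (by linarith [hmem t ht])))
    (fun t ht => hasDerivAt_li (hmem t ht)) ?_ ?_
  · refine ContinuousOn.intervalIntegrable fun t ht => ?_
    exact (continuousAt_const.mul (continuousAt_rpow_const _ _
      (Or.inl (by linarith [hmem t ht])))).continuousWithinAt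
  · refine ContinuousOn.intervalIntegrable fun t ht => ?_
    have : log t ≠ 0 := (log_pos (hmem t ht)).ne'
    have : t ≠ 0 := by linarith [hmem t ht]
    fun_prop (disch := assumption)

lemma monotone_primePi : Monotone primePi :=
  fun _ _ hxy => Nat.cast_le.mpr (Nat.monotone_primeCounting (Nat.floor_le_floor hxy))

lemma sum_Icc_ite_prime (n : ℕ) :
    ∑ k ∈ Finset.Icc 0 n, (if k.Prime then (1 : ℝ) else 0) = Nat.primeCounting n := by
  simp only [Nat.primeCounting, Nat.primeCounting', Nat.count_eq_card_filter_range]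
  rw [Finset.card_eq_sum_ones, Nat.range_succ_eq_Icc_zero, Finset.sum_filter]
  push_cast; rfl

lemma sum_primes_one_div_rpow {s y : ℝ} (hy : 2 ≤ y) :
    ∑ p ∈ (Finset.Iic ⌊y⌋₊).filter Nat.Prime, 1 / (p : ℝ) ^ s =
      y ^ (-s) * primePi y - ∫ t in 2..y, (-s * t ^ (-s - 1)) * primePi t := by
  have hderiv : ∀ t ∈ Icc 2 y, HasDerivAt (fun u : ℝ => u ^ (-s)) (-s * t ^ (-s - 1)) t :=
    fun t ht => hasDerivAt_rpow_const (Or.inl (by linarith [ht.1]))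
  have hint : IntegrableOn (deriv fun u : ℝ => u ^ (-s)) (Icc 2 y) := by
    refine ContinuousOn.integrableOn_Icc fun t ht => ContinuousWithinAt.congr ?_
      (fun u hu => (hderiv u hu).deriv) (hderiv t ht).deriv
    exact (continuousAt_const.mul (continuousAt_rpow_const _ _
      (Or.inl (by linarith [ht.1])))).continuousWithinAt
  have habel := sum_mul_eq_sub_integral_mul₁ (fun k => if k.Prime then (1 : ℝ) else 0)
    (f := fun u : ℝ => u ^ (-s)) (by simp [Nat.not_prime_zero]) (by simp [Nat.not_prime_one]) y
    (fun t ht => (hderiv t ht).differentiableAt) hint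
  rw [← intervalIntegral.integral_of_le hy, sum_Icc_ite_prime] at habel
  have hintegrand : ∫ t in 2..y, deriv (fun u : ℝ => u ^ (-s)) t *
      ∑ k ∈ Finset.Icc 0 ⌊t⌋₊, (if k.Prime then (1 : ℝ) else 0) =
      ∫ t in 2..y, (-s * t ^ (-s - 1)) * primePi t :=
    integral_congr fun t ht => by
      rw [uIcc_of_le hy] at ht
      rw [(hderiv t ht).deriv, sum_Icc_ite_prime, primePi]
  rw [primePi, ← hintegrand, ← habel, Finset.sum_filter]
  refine Finset.sum_congr (by ext; simp) fun k _ => ?_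
  split_ifs <;> simp [rpow_neg]

lemma sum_primes_add_expIntE1Ext_eq {s y : ℝ} (hs : s ≠ 1) (hy : 2 ≤ y) :
    (∑ p ∈ (Finset.Iic ⌊y⌋₊).filter Nat.Prime, 1 / (p : ℝ) ^ s) +
        expIntE1Ext ((s - 1) * log y) =
      (expIntE1Ext ((s - 1) * log 2) + 2 ^ (-s) * li 2) + y ^ (-s) * (primePi y - li y) +
        ∫ t in 2..y, s * t ^ (-s - 1) * (primePi t - li t) := by
  have hF : expIntE1Ext ((s - 1) * log y) =
      expIntE1Ext ((s - 1) * log 2) - ∫ t in 2..y, t ^ (-s) * (1 / log t) := by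
    linarith [expIntE1Ext_mul_log_sub hs one_lt_two hy]
  have hpow : ContinuousOn (fun t : ℝ => -s * t ^ (-s - 1)) (uIcc 2 y) := fun t ht => by
    rw [uIcc_of_le hy] at ht
    exact (continuousAt_const.mul (continuousAt_rpow_const _ _
      (Or.inl (by linarith [ht.1])))).continuousWithinAt
  have hπ : IntervalIntegrable (fun t => (-s * t ^ (-s - 1)) * primePi t) volume 2 y :=
    monotone_primePi.intervalIntegrable.continuousOn_mul hpow
  have hli : IntervalIntegrable (fun t => (-s * t ^ (-s - 1)) * li t) volume 2 y :=
    (hpow.mul (continuousOn_li.mono fun t ht => by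
      rw [uIcc_of_le hy] at ht; exact lt_of_lt_of_le one_lt_two ht.1)).intervalIntegrable
  have hE : ∫ t in 2..y, s * t ^ (-s - 1) * (primePi t - li t) =
      -((∫ t in 2..y, (-s * t ^ (-s - 1)) * primePi t) -
        ∫ t in 2..y, (-s * t ^ (-s - 1)) * li t) := by
    rw [← integral_sub hπ hli, ← intervalIntegral.integral_neg]
    congr 1; ext t; ring
  rw [sum_primes_one_div_rpow hy, hF, integral_rpow_neg_mul_one_div_log one_lt_two hy, hE]
  ring

lemma exists_tendsto_of_eq_add_integral {F g h : ℝ → ℝ} {a c : ℝ}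
    (hF : ∀ y ≥ a, F y = c + g y + ∫ t in a..y, h t)
    (hg : Tendsto g atTop (𝓝 0)) (hh : IntegrableOn h (Ioi a)) :
    ∃ L, Tendsto F atTop (𝓝 L) :=
  ⟨c + 0 + ∫ t in Ioi a, h t, ((tendsto_const_nhds.add hg).add
    (intervalIntegral_tendsto_integral_Ioi a hh tendsto_id)).congr'
    ((eventually_ge_atTop a).mono fun y hy => (hF y hy).symm)⟩

lemma abs_le_rpow_of_abs_le_sqrt_mul_log {E : ℝ → ℝ} {C ε : ℝ} (hε : 0 < ε)
    (hE : ∀ t ≥ 2, |E t| ≤ C * √t * log t) :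
    ∀ t ≥ 2, |E t| ≤ C / ε * t ^ (1 / 2 + ε) := by
  have hC : 0 ≤ C := by
    have h2 := (abs_nonneg _).trans (hE 2 le_rfl)
    rw [mul_nonneg_iff_of_pos_right (log_pos one_lt_two),
      mul_nonneg_iff_of_pos_right (sqrt_pos.2 two_pos)] at h2
    exact h2
  intro t ht
  calc |E t| ≤ C * √t * log t := hE t ht
    _ ≤ C * √t * (t ^ ε / ε) := by gcongr; exact log_le_rpow_div (by linarith) hε
    _ = C / ε * t ^ (1 / 2 + ε) := by
      rw [rpow_add (by linarith), sqrt_eq_rpow]; ring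

lemma tendsto_rpow_neg_mul_of_abs_le_rpow {E : ℝ → ℝ} {K r s a : ℝ} (hrs : r < s)
    (hE : ∀ t ≥ a, |E t| ≤ K * t ^ r) : Tendsto (fun t => t ^ (-s) * E t) atTop (𝓝 0) := by
  have hlim : Tendsto (fun t : ℝ => K * t ^ (-(s - r))) atTop (𝓝 0) := by
    simpa using (tendsto_rpow_neg_atTop (sub_pos.2 hrs)).const_mul K
  refine squeeze_zero_norm' ?_ hlim
  filter_upwards [eventually_ge_atTop a, eventually_gt_atTop 0] with t hta ht0
  rw [norm_mul, norm_of_nonneg (rpow_nonneg ht0.le _), norm_eq_abs]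
  calc t ^ (-s) * |E t| ≤ t ^ (-s) * (K * t ^ r) := by gcongr; exact hE t hta
    _ = K * t ^ (-(s - r)) := by rw [neg_sub, rpow_sub ht0, rpow_neg ht0.le]; ring

lemma integrableOn_rpow_mul_of_abs_le_rpow {E : ℝ → ℝ} {K r s a : ℝ} (hrs : r < s)
    (ha : 0 < a) (hE : ∀ t ≥ a, |E t| ≤ K * t ^ r)
    (hEm : AEStronglyMeasurable E (volume.restrict (Ioi a))) :
    IntegrableOn (fun t => t ^ (-s - 1) * E t) (Ioi a) := by
  refine ((integrableOn_Ioi_rpow_of_lt (by linarith : r - s - 1 < -1) ha).const_mul K).mono' ?_ ?_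
  · refine ContinuousOn.aestronglyMeasurable (fun t ht => ?_) measurableSet_Ioi |>.mul hEm
    exact (continuousAt_rpow_const _ _ (Or.inl (ha.trans ht).ne')).continuousWithinAt
  · rw [ae_restrict_iff' measurableSet_Ioi]
    refine .of_forall fun t (ht : a < t) => ?_
    have ht0 : 0 < t := ha.trans ht
    rw [norm_mul, norm_of_nonneg (rpow_nonneg ht0.le _), norm_eq_abs]
    calc t ^ (-s - 1) * |E t| ≤ t ^ (-s - 1) * (K * t ^ r) := by gcongr; exact hE t ht.le
      _ = K * t ^ (r - s - 1) := by
        rw [mul_left_comm, ← rpow_add ht0]; ring_nf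

theorem primeZeta_continuation (C : ℝ)
    (h : ∀ x ≥ (2 : ℝ), |primePi x - li x| ≤ C * Real.sqrt x * Real.log x)
    (s : ℝ) (hs : 1 / 2 < s) (hs' : s ≠ 1) :
    ∃ L : ℝ, Filter.Tendsto
      (fun x : ℝ =>
        (∑ p ∈ (Finset.Iic ⌊x⌋₊).filter Nat.Prime, 1 / (p : ℝ) ^ s) +
          expIntE1Ext ((s - 1) * Real.log x))
      Filter.atTop (nhds L) := by
  have hε : 0 < (s - 1 / 2) / 2 := by linarith
  have hrs : 1 / 2 + (s - 1 / 2) / 2 < s := by linarith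
  have hE := abs_le_rpow_of_abs_le_sqrt_mul_log (E := fun t => primePi t - li t) hε h
  have hEm : AEStronglyMeasurable (fun t => primePi t - li t) (volume.restrict (Ioi 2)) :=
    monotone_primePi.measurable.aestronglyMeasurable.sub
      ((continuousOn_li.mono (Ioi_subset_Ioi one_le_two)).aestronglyMeasurable measurableSet_Ioi)
  refine exists_tendsto_of_eq_add_integral (fun y hy => sum_primes_add_expIntE1Ext_eq hs' hy)
    (tendsto_rpow_neg_mul_of_abs_le_rpow hrs hE) ?_
  simp_rw [mul_assoc]
  exact (integrableOn_rpow_mul_of_abs_le_rpow hrs two_pos hE hEm).const_mul s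
end
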